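/- Let 0 < δ < 1. Suppose that for each j ∈ ℤ we are given a countable family (θ_{j,k})_{k∈K_j} of vectors of H such that (1−δ)‖g‖² ≤ ∑_{k∈K_j} |⟨g, θ_{j,k}⟩|² ≤ ‖g‖² for every g ∈ E_{2^{2j+4}}(L). Define Θ_{j,k} := Φ(2^{-2j}L)θ_{j,k}. Then each Θ_{j,k} belongs to the closed span of {u_m : 2^{2j-2} ≤ λ_m ≤ 2^{2j+4}} (hence to E_{2^{2j+4}}(L)), and for every f ∈ H one has the frame inequalities (1−δ)‖f − Pf‖² ≤ ∑_{j∈ℤ} ∑_{k∈K_j} |⟨f, Θ_{j,k}⟩|² ≤ ‖f − Pf‖². -/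

import Mathlib

/-! Each `Φ(2^{-2j}L)` acts diagonally on the eigenbasis with real coefficients, so it is symmetric
and maps `H` into `E_{2^{2j+4}}(L)`. Hence `⟨f, Θ_{j,k}⟩ = ⟨g_j, θ_{j,k}⟩` with
`g_j = Φ(2^{-2j}L) f`, and the frame bounds at scale `j` squeeze `∑_k |⟨f, Θ_{j,k}⟩|²` between
`(1-δ)‖g_j‖²` and `‖g_j‖²`. By Parseval and the partition of unity `∑_j Φ(2^{-2j}s)² = 1` for
`s > 0` (and `Φ 0 = 0`), `∑_j ‖g_j‖² = ∑_{λ_m > 0} |⟨u_m, f⟩|² = ‖f - Pf‖²`; every sum has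
nonnegative terms, so the double sums may be reordered. -/

open scoped InnerProductSpace

theorem summable_of_tsum_ne_zero {α β : Type*} [AddCommMonoid α] [TopologicalSpace α]
    {f : β → α} (h : ∑' b, f b ≠ 0) : Summable f :=
  not_not.1 (mt tsum_eq_zero_of_not_summable h)

theorem HasSum.of_prod_fiberwise_of_nonneg {α β : Type*} {F : α × β → ℝ} (hF : 0 ≤ F)
    {f : α → ℝ} {g : β → ℝ} {s : ℝ} (hf : ∀ a, HasSum (fun b => F (a, b)) (f a))
    (hg : ∀ b, HasSum (fun a => F (a, b)) (g b)) (hs : HasSum f s) : HasSum g s := by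
  have hFs : Summable F := (summable_prod_of_nonneg hF).2
    ⟨fun a => (hf a).summable, by simpa only [(hf _).tsum_eq] using hs.summable⟩
  have hswap : ∑' p : β × α, F p.swap = ∑' p, F p := (Equiv.prodComm β α).tsum_eq F
  rw [hs.unique (hFs.hasSum.prod_fiberwise hf), ← hswap]
  exact hFs.prod_symm.hasSum.prod_fiberwise hg

theorem tsum_sigma_mem_Icc_of_fiberwise {ι : Type*} {K : ι → Type*} {F : (Σ i, K i) → ℝ}
    (hF : 0 ≤ F) {b : ι → ℝ} {s c : ℝ} (hb : HasSum b s)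
    (hfib : ∀ i, Summable fun k => F ⟨i, k⟩)
    (hbound : ∀ i, ∑' k, F ⟨i, k⟩ ∈ Set.Icc (c * b i) (b i)) :
    ∑' p, F p ∈ Set.Icc (c * s) s := by
  have hmarg : Summable fun i => ∑' k, F ⟨i, k⟩ :=
    hb.summable.of_nonneg_of_le (fun i => tsum_nonneg fun k => hF _) fun i => (hbound i).2
  rw [(summable_sigma_of_nonneg hF).2 ⟨hfib, hmarg⟩ |>.tsum_sigma, ← hb.tsum_eq,
    ← tsum_mul_left]
  exact ⟨(hb.summable.mul_left c).tsum_le_tsum (fun i => (hbound i).1) hmarg,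
    hmarg.tsum_le_tsum (fun i => (hbound i).2) hb.summable⟩

section
variable {ι 𝕜 E : Type*} [RCLike 𝕜] [NormedAddCommGroup E] [InnerProductSpace 𝕜 E]

theorem summable_norm_inner_sq_of_le_tsum {κ : Type*} {θ : κ → E} {c : ℝ} (hc : 0 < c)
    {x : E} (hx : c * ‖x‖ ^ 2 ≤ ∑' k, ‖⟪x, θ k⟫_𝕜‖ ^ 2) :
    Summable fun k => ‖⟪x, θ k⟫_𝕜‖ ^ 2 := by
  rcases eq_or_ne x 0 with rfl | hx0
  · simp
  · have hpos : 0 < c * ‖x‖ ^ 2 := by positivity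
    exact summable_of_tsum_ne_zero (hpos.trans_le hx).ne'

theorem Orthonormal.inner_eq_of_hasSum_smul {v : ι → E} (hv : Orthonormal 𝕜 v) {c : ι → 𝕜}
    {x : E} (h : HasSum (fun i => c i • v i) x) (i : ι) : ⟪v i, x⟫_𝕜 = c i := by
  classical
  refine (h.mapL (innerSL 𝕜 (v i))).unique ?_
  convert hasSum_ite_eq i (c i) using 2 with j
  rcases eq_or_ne j i with rfl | hji
  · simp [hv.1 j]
  · simp [hv.inner_eq_zero hji.symm, hji]

theorem Orthonormal.inner_eq_zero_of_mem_closure_span {v : ι → E} (hv : Orthonormal 𝕜 v)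
    {p : ι → Prop} {i : ι} (hi : ¬ p i) {x : E}
    (hx : x ∈ (Submodule.span 𝕜 {y | ∃ j, p j ∧ y = v j}).topologicalClosure) :
    ⟪v i, x⟫_𝕜 = 0 := by
  have hle : (Submodule.span 𝕜 {y | ∃ j, p j ∧ y = v j}).topologicalClosure ≤ (𝕜 ∙ v i)ᗮ := by
    refine Submodule.topologicalClosure_minimal _ (Submodule.span_le.2 ?_)
      (Submodule.isClosed_orthogonal _)
    rintro _ ⟨j, hj, rfl⟩
    exact Submodule.mem_orthogonal_singleton_iff_inner_right.2
      (hv.inner_eq_zero (ne_of_apply_ne p (by simp [hi, hj])))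
  exact Submodule.mem_orthogonal_singleton_iff_inner_right.1 (hle hx)

theorem Orthonormal.inner_sub_eq_ite {v : ι → E} (hv : Orthonormal 𝕜 v) {p : ι → Prop}
    [DecidablePred p] {x y : E}
    (hy : y ∈ (Submodule.span 𝕜 {z | ∃ j, p j ∧ z = v j}).topologicalClosure)
    (hxy : x - y ∈ (Submodule.span 𝕜 {z | ∃ j, p j ∧ z = v j}).topologicalClosureᗮ) (i : ι) :
    ⟪v i, x - y⟫_𝕜 = if p i then 0 else ⟪v i, x⟫_𝕜 := by
  split_ifs with hi
  · exact Submodule.inner_right_of_mem_orthogonal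
      (Submodule.le_topologicalClosure _
        (Submodule.subset_span (s := {z | ∃ j, p j ∧ z = v j}) ⟨i, hi, rfl⟩)) hxy
  · rw [inner_sub_right, hv.inner_eq_zero_of_mem_closure_span hi hy, sub_zero]

theorem mem_closure_span_of_hasSum_smul {v : ι → E} {c : ι → 𝕜} {x : E}
    (h : HasSum (fun i => c i • v i) x) {S : Set E} (hS : ∀ i, c i ≠ 0 → v i ∈ S) :
    x ∈ (Submodule.span 𝕜 S).topologicalClosure := by
  refine Submodule.isClosed_topologicalClosure _ |>.mem_of_tendsto h
    (Filter.Eventually.of_forall fun s => Submodule.le_topologicalClosure _ ?_)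
  refine Submodule.sum_mem _ fun i _ => ?_
  rcases eq_or_ne (c i) 0 with hc | hc
  · simp [hc]
  · exact Submodule.smul_mem _ _ (Submodule.subset_span (hS i hc))

theorem HilbertBasis.hasSum_norm_inner_sq [CompleteSpace E] (b : HilbertBasis ι 𝕜 E) (x : E) :
    HasSum (fun i => ‖⟪b i, x⟫_𝕜‖ ^ 2) (‖x‖ ^ 2) := by
  simpa [b.repr_apply_apply] using lp.hasSum_norm (p := 2) (by norm_num) (b.repr x)

def HilbertBasis.IsMultiplier (u : HilbertBasis ι 𝕜 E) (a : ι → ℝ) (T : E → E) : Prop :=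
  ∀ x, HasSum (fun i => ((a i : 𝕜) * ⟪u i, x⟫_𝕜) • u i) (T x)

namespace HilbertBasis.IsMultiplier

variable {u : HilbertBasis ι 𝕜 E} {a : ι → ℝ} {T : E → E}

theorem inner_basis_apply (hT : u.IsMultiplier a T) (x : E) (i : ι) :
    ⟪u i, T x⟫_𝕜 = a i * ⟪u i, x⟫_𝕜 :=
  u.orthonormal.inner_eq_of_hasSum_smul (hT x) i

theorem mem_closure_span (hT : u.IsMultiplier a T) (x : E) {S : Set E}
    (hS : ∀ i, a i ≠ 0 → u i ∈ S) : T x ∈ (Submodule.span 𝕜 S).topologicalClosure :=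
  mem_closure_span_of_hasSum_smul (hT x) fun i hi => hS i (by simpa using left_ne_zero_of_mul hi)

theorem inner_apply_comm [CompleteSpace E] (hT : u.IsMultiplier a T) (x y : E) :
    ⟪x, T y⟫_𝕜 = ⟪T x, y⟫_𝕜 := by
  rw [← u.tsum_inner_mul_inner, ← u.tsum_inner_mul_inner]
  congr 1 with i
  rw [hT.inner_basis_apply, ← inner_conj_symm (T x), hT.inner_basis_apply, ← inner_conj_symm x]
  simp only [map_mul, RCLike.conj_ofReal]
  ring

theorem hasSum_norm_sq [CompleteSpace E] (hT : u.IsMultiplier a T) (x : E) :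
    HasSum (fun i => a i ^ 2 * ‖⟪u i, x⟫_𝕜‖ ^ 2) (‖T x‖ ^ 2) := by
  simpa [hT.inner_basis_apply, mul_pow] using u.hasSum_norm_inner_sq (T x)

end HilbertBasis.IsMultiplier

theorem HilbertBasis.hasSum_norm_sq_of_isMultiplier [CompleteSpace E] {κ : Type*}
    (u : HilbertBasis ι 𝕜 E) {a : κ → ι → ℝ} {T : κ → E → E}
    (hT : ∀ j, u.IsMultiplier (a j) (T j)) {w : ι → ℝ}
    (hw : ∀ i, HasSum (fun j => a j i ^ 2) (w i))
    {x : E} {s : ℝ} (hs : HasSum (fun i => w i * ‖⟪u i, x⟫_𝕜‖ ^ 2) s) :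
    HasSum (fun j => ‖T j x‖ ^ 2) s := by
  refine hs.of_prod_fiberwise_of_nonneg
    (F := fun p : ι × κ => a p.2 p.1 ^ 2 * ‖⟪u p.1, x⟫_𝕜‖ ^ 2) (fun _ => by positivity)
    (fun i => ?_) fun j => (hT j).hasSum_norm_sq x
  exact (hw i).mul_right (‖⟪u i, x⟫_𝕜‖ ^ 2)

end

theorem hasSum_sq_of_tsum_sq_eq_one {Φ : ℝ → ℝ} (hΦ0 : Φ 0 = 0) {r : ℤ → ℝ}
    (hΦsum : ∀ s : ℝ, 0 < s → ∑' j : ℤ, |Φ (r j * s)| ^ 2 = 1) {s : ℝ} (hs : 0 ≤ s) :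
    HasSum (fun j : ℤ => Φ (r j * s) ^ 2) (if s = 0 then 0 else 1) := by
  rcases hs.eq_or_lt with rfl | hs
  · simp [hΦ0]
  · have h := hΦsum s hs
    simp only [sq_abs] at h
    rw [if_neg hs.ne', ← h]
    exact (summable_of_tsum_ne_zero (h ▸ one_ne_zero)).hasSum

theorem mem_Icc_of_zpow_neg_mul_mem_Icc {b : ℝ} (hb : 0 < b) {n p q : ℤ} {s : ℝ}
    (h : b ^ (-n) * s ∈ Set.Icc (b ^ p) (b ^ q)) : s ∈ Set.Icc (b ^ (n + p)) (b ^ (n + q)) := by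
  have hs : s = b ^ n * (b ^ (-n) * s) := by
    rw [← mul_assoc, ← zpow_add₀ hb.ne', add_neg_cancel, zpow_zero, one_mul]
  rw [hs, zpow_add₀ hb.ne', zpow_add₀ hb.ne']
  exact ⟨by gcongr; exact h.1, by gcongr; exact h.2⟩

theorem frame_theorem_hilbert_core_general
    {H : Type*} [NormedAddCommGroup H] [InnerProductSpace ℂ H] [CompleteSpace H]
    (u : HilbertBasis ℕ ℂ H) (lam : ℕ → ℝ) (hlam : ∀ m, 0 ≤ lam m)
    (Φ : ℝ → ℝ)
    (hΦsupp : ∀ s : ℝ, s ∉ Set.Icc ((2 : ℝ) ^ (-2 : ℤ)) ((2 : ℝ) ^ (4 : ℤ)) → Φ s = 0)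
    (hΦsum : ∀ s : ℝ, 0 < s → ∑' j : ℤ, |Φ ((2 : ℝ) ^ (-(2 * j)) * s)| ^ 2 = 1)
    (ΦL : ℝ → H → H)
    (hΦL : ∀ t : ℝ, ∀ f : H,
      HasSum (fun m : ℕ => ((Φ (t * lam m) : ℂ) * ⟪u m, f⟫_ℂ) • u m) (ΦL t f))
    -- `E ω` is the space of `ω`-bandlimited vectors: the closed span of `{u m : λ_m ≤ ω}`
    (E : ℝ → Submodule ℂ H)
    (hE : ∀ ω : ℝ, E ω =
      (Submodule.span ℂ {x : H | ∃ m : ℕ, lam m ≤ ω ∧ x = u m}).topologicalClosure)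
    -- `P` is the orthogonal projection onto the closed span of the kernel eigenvectors
    (P : H → H)
    (hPmem : ∀ f : H, P f ∈
      (Submodule.span ℂ {x : H | ∃ m : ℕ, lam m = 0 ∧ x = u m}).topologicalClosure)
    (hPorth : ∀ f : H, f - P f ∈
      (Submodule.span ℂ {x : H | ∃ m : ℕ, lam m = 0 ∧ x = u m}).topologicalClosureᗮ)
    (δ : ℝ) (hδ1 : δ < 1)
    (K : ℤ → Type*)
    (θ : (j : ℤ) → K j → H)
    (hframe : ∀ j : ℤ, ∀ g ∈ E ((2 : ℝ) ^ (2 * j + 4)),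
      (1 - δ) * ‖g‖ ^ 2 ≤ ∑' k : K j, ‖⟪g, θ j k⟫_ℂ‖ ^ 2 ∧
      ∑' k : K j, ‖⟪g, θ j k⟫_ℂ‖ ^ 2 ≤ ‖g‖ ^ 2)
    (Θ : (j : ℤ) → K j → H)
    (hΘ : ∀ (j : ℤ) (k : K j), Θ j k = ΦL ((2 : ℝ) ^ (-(2 * j))) (θ j k)) :
    (∀ (j : ℤ) (k : K j),
      Θ j k ∈ (Submodule.span ℂ {x : H | ∃ m : ℕ,
        (2 : ℝ) ^ (2 * j - 2) ≤ lam m ∧ lam m ≤ (2 : ℝ) ^ (2 * j + 4) ∧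
          x = u m}).topologicalClosure ∧
      Θ j k ∈ E ((2 : ℝ) ^ (2 * j + 4))) ∧
    (∀ f : H,
      (1 - δ) * ‖f - P f‖ ^ 2 ≤ ∑' p : Σ j : ℤ, K j, ‖⟪f, Θ p.1 p.2⟫_ℂ‖ ^ 2 ∧
      ∑' p : Σ j : ℤ, K j, ‖⟪f, Θ p.1 p.2⟫_ℂ‖ ^ 2 ≤ ‖f - P f‖ ^ 2) := by
  have hT : ∀ t, u.IsMultiplier (fun m => Φ (t * lam m)) (ΦL t) := hΦL
  have hband : ∀ (j : ℤ) m, Φ ((2 : ℝ) ^ (-(2 * j)) * lam m) ≠ 0 →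
      (2 : ℝ) ^ (2 * j - 2) ≤ lam m ∧ lam m ≤ (2 : ℝ) ^ (2 * j + 4) := fun j m h => by
    simpa only [sub_eq_add_neg, Set.mem_Icc] using
      mem_Icc_of_zpow_neg_mul_mem_Icc two_pos (not_imp_comm.1 (hΦsupp _) h)
  have hgE : ∀ (j : ℤ) x, ΦL ((2 : ℝ) ^ (-(2 * j))) x ∈ E ((2 : ℝ) ^ (2 * j + 4)) :=
    fun j x => hE _ ▸ (hT _).mem_closure_span x fun m h => ⟨m, (hband j m h).2, rfl⟩
  refine ⟨fun j k => ?_, fun f => ?_⟩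
  · rw [hΘ]
    exact ⟨(hT _).mem_closure_span _ fun m h => ⟨m, (hband j m h).1, (hband j m h).2, rfl⟩, hgE j _⟩
  set g : ℤ → H := fun j => ΦL ((2 : ℝ) ^ (-(2 * j))) f
  have hΦ0 : Φ 0 = 0 := hΦsupp 0 fun h => (zpow_pos two_pos _).not_ge h.1
  have hg : HasSum (fun j => ‖g j‖ ^ 2) (‖f - P f‖ ^ 2) := by
    refine u.hasSum_norm_sq_of_isMultiplier (fun j => hT _)
      (fun m => hasSum_sq_of_tsum_sq_eq_one hΦ0 hΦsum (hlam m)) ?_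
    convert u.hasSum_norm_inner_sq (f - P f) using 2 with m
    rw [u.orthonormal.inner_sub_eq_ite (hPmem f) (hPorth f)]
    split_ifs <;> simp
  have hinner : ∀ j k, ⟪f, Θ j k⟫_ℂ = ⟪g j, θ j k⟫_ℂ := fun j k => by
    rw [hΘ]; exact (hT _).inner_apply_comm f (θ j k)
  have hgframe := fun j => hframe j (g j) (hgE j f)
  have hfiber : ∀ j, Summable fun k => ‖⟪g j, θ j k⟫_ℂ‖ ^ 2 :=
    fun j => summable_norm_inner_sq_of_le_tsum (sub_pos.2 hδ1) (hgframe j).1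
  simp only [hinner]
  exact tsum_sigma_mem_Icc_of_fiberwise (fun _ => sq_nonneg _) hg hfiber hgframe

/-- Hilbert-space core of the Frame Theorem: if for each `j ∈ ℤ` the family `(θ j k)` is a
frame with bounds `1−δ, 1` for the bandlimited space `E_{2^{2j+4}}(L)`, then the functions
`Θ j k := Φ(2^{-2j}L) θ j k` are bandlimited to `[2^{2j-2}, 2^{2j+4}]` and satisfy the frame
inequalities `(1−δ)‖f−Pf‖² ≤ ∑_{j,k} |⟨f, Θ_{j,k}⟩|² ≤ ‖f−Pf‖²` for all `f ∈ H`. -/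
theorem frame_theorem_hilbert_core
    {H : Type*} [NormedAddCommGroup H] [InnerProductSpace ℂ H] [CompleteSpace H]
    (u : HilbertBasis ℕ ℂ H) (lam : ℕ → ℝ) (hlam : ∀ m, 0 ≤ lam m)
    (Φ : ℝ → ℝ) (hΦbd : ∃ C : ℝ, ∀ s, |Φ s| ≤ C)
    (hΦsupp : ∀ s : ℝ, s ∉ Set.Icc ((2 : ℝ) ^ (-2 : ℤ)) ((2 : ℝ) ^ (4 : ℤ)) → Φ s = 0)
    (hΦsum : ∀ s : ℝ, 0 < s → ∑' j : ℤ, |Φ ((2 : ℝ) ^ (-(2 * j)) * s)| ^ 2 = 1)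
    (ΦL : ℝ → H → H)
    (hΦL : ∀ t : ℝ, ∀ f : H,
      HasSum (fun m : ℕ => ((Φ (t * lam m) : ℂ) * ⟪u m, f⟫_ℂ) • u m) (ΦL t f))
    -- `E ω` is the space of `ω`-bandlimited vectors: the closed span of `{u m : λ_m ≤ ω}`
    (E : ℝ → Submodule ℂ H)
    (hE : ∀ ω : ℝ, E ω =
      (Submodule.span ℂ {x : H | ∃ m : ℕ, lam m ≤ ω ∧ x = u m}).topologicalClosure)
    -- `P` is the orthogonal projection onto the closed span of the kernel eigenvectors
    (P : H → H)
    (hPmem : ∀ f : H, P f ∈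
      (Submodule.span ℂ {x : H | ∃ m : ℕ, lam m = 0 ∧ x = u m}).topologicalClosure)
    (hPorth : ∀ f : H, f - P f ∈
      (Submodule.span ℂ {x : H | ∃ m : ℕ, lam m = 0 ∧ x = u m}).topologicalClosureᗮ)
    (δ : ℝ) (hδ0 : 0 < δ) (hδ1 : δ < 1)
    (K : ℤ → Type*) [∀ j, Countable (K j)]
    (θ : (j : ℤ) → K j → H)
    (hframe : ∀ j : ℤ, ∀ g ∈ E ((2 : ℝ) ^ (2 * j + 4)),
      (1 - δ) * ‖g‖ ^ 2 ≤ ∑' k : K j, ‖⟪g, θ j k⟫_ℂ‖ ^ 2 ∧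
      ∑' k : K j, ‖⟪g, θ j k⟫_ℂ‖ ^ 2 ≤ ‖g‖ ^ 2)
    (Θ : (j : ℤ) → K j → H)
    (hΘ : ∀ (j : ℤ) (k : K j), Θ j k = ΦL ((2 : ℝ) ^ (-(2 * j))) (θ j k)) :
    (∀ (j : ℤ) (k : K j),
      Θ j k ∈ (Submodule.span ℂ {x : H | ∃ m : ℕ,
        (2 : ℝ) ^ (2 * j - 2) ≤ lam m ∧ lam m ≤ (2 : ℝ) ^ (2 * j + 4) ∧
          x = u m}).topologicalClosure ∧
      Θ j k ∈ E ((2 : ℝ) ^ (2 * j + 4))) ∧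
    (∀ f : H,
      (1 - δ) * ‖f - P f‖ ^ 2 ≤ ∑' p : Σ j : ℤ, K j, ‖⟪f, Θ p.1 p.2⟫_ℂ‖ ^ 2 ∧
      ∑' p : Σ j : ℤ, K j, ‖⟪f, Θ p.1 p.2⟫_ℂ‖ ^ 2 ≤ ‖f - P f‖ ^ 2) :=
  frame_theorem_hilbert_core_general u lam hlam Φ hΦsupp hΦsum ΦL hΦL E hE P hPmem hPorth δ hδ1 K θ
    hframe Θ hΘ
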